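/- Any T-path in G either contains an edge joining two distinct members of a T-subpartition 𝒳, or contains at least two edges of δ(K) for some connected component K of G∖𝒳. -/

import Mathlib

open scoped Classical

/-- A finite multigraph without selfloops: edges carry an (arbitrary) orientation
given by `src` and `tgt`, but are regarded as undirected. -/
structure Multigraph where
  V : Type
  E : Type
  [fV : Fintype V]
  [dV : DecidableEq V]
  [fE : Fintype E]
  [dE : DecidableEq E]
  src : E → V
  tgt : E → V
  noLoop : ∀ e, src e ≠ tgt e

attribute [instance] Multigraph.fV Multigraph.dV Multigraph.fE Multigraph.dE

namespace Multigraph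

variable (G : Multigraph)

/-- the edge `e` joins the vertices `u` and `v` (in either orientation). -/
def Joins (e : G.E) (u v : G.V) : Prop :=
  (G.src e = u ∧ G.tgt e = v) ∨ (G.src e = v ∧ G.tgt e = u)

/-- `δ(X)`: the set of edges with exactly one endpoint in `X`. -/
noncomputable def cutE (X : Set G.V) : Finset G.E :=
  Finset.univ.filter fun e =>
    (G.src e ∈ X ∧ G.tgt e ∉ X) ∨ (G.src e ∉ X ∧ G.tgt e ∈ X)

/-- `d(X) = |δ(X)|`. -/
noncomputable def d (X : Set G.V) : ℕ := (G.cutE X).card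

/-- adjacency within the induced subgraph on `W`. -/
def adjOn (W : Set G.V) (u v : G.V) : Prop :=
  u ∈ W ∧ v ∈ W ∧ ∃ e, G.Joins e u v

/-- `K` is the vertex set of a connected component of the subgraph induced on `W`. -/
def IsCompOf (W K : Set G.V) : Prop :=
  ∃ v ∈ W, K = {u | Relation.ReflTransGen (G.adjOn W) v u}

end Multigraph

/-- A `T`-path in `G`: a path whose two (distinct) endpoints are terminals of `T`
and whose internal vertices avoid `T`. -/
structure TPath (G : Multigraph) (T : Finset G.V) where
  verts : List G.V
  edges : List G.E
  hlen : verts.length = edges.length + 1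
  hne : edges ≠ []
  hadj : ∀ i (h : i < edges.length),
    G.Joins (edges.get ⟨i, h⟩) (verts.get ⟨i, by omega⟩) (verts.get ⟨i + 1, by omega⟩)
  nodup : verts.Nodup
  first : G.V
  last : G.V
  hfirst : verts.head? = some first
  hlast : verts.getLast? = some last
  hfirstT : first ∈ T
  hlastT : last ∈ T
  hinternal : ∀ i (h : i < verts.length), 0 < i → i < verts.length - 1 →
    verts.get ⟨i, h⟩ ∉ T

/-- a family of pairwise edge-disjoint `T`-paths. -/
def PairwiseEdgeDisjoint {G : Multigraph} {T : Finset G.V} {k : ℕ}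
    (P : Fin k → TPath G T) : Prop :=
  ∀ i j, i ≠ j → ∀ e, e ∈ (P i).edges → e ∉ (P j).edges

/-- A `T`-subpartition: pairwise disjoint vertex sets `X s` (for `s ∈ T`)
with `X s ∩ T = {s}`. -/
structure TSubpartition (G : Multigraph) (T : Finset G.V) where
  X : G.V → Set G.V
  hmem : ∀ s ∈ T, X s ∩ (T : Set G.V) = {s}
  hdisj : ∀ s ∈ T, ∀ t ∈ T, s ≠ t → Disjoint (X s) (X t)

namespace TSubpartition

variable {G : Multigraph} {T : Finset G.V} (𝒳 : TSubpartition G T)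

/-- the vertex set of `G ∖ 𝒳`. -/
def rest : Set G.V := (⋃ s ∈ T, 𝒳.X s)ᶜ

noncomputable def dSum : ℕ := ∑ s ∈ T, G.d (𝒳.X s)

/-- number of odd components of `G ∖ 𝒳`. -/
noncomputable def oddComps : ℕ :=
  {K : Set G.V | G.IsCompOf 𝒳.rest K ∧ Odd (G.d K)}.ncard

/-- `κ(𝒳) = (Σ_{s∈T} d(X_s) − odd(G∖𝒳)) / 2`. -/
noncomputable def kappa : ℚ := ((𝒳.dSum : ℚ) - (𝒳.oddComps : ℚ)) / 2

/-- `d(𝒳)`: the number of edges joining two distinct members of `𝒳`. -/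
noncomputable def dCross : ℕ :=
  (Finset.univ.filter fun e =>
    ∃ s ∈ T, ∃ t ∈ T, s ≠ t ∧ G.src e ∈ 𝒳.X s ∧ G.tgt e ∈ 𝒳.X t).card

end TSubpartition

/-!
If no edge of the path joins two distinct members of `𝒳`, then at the first step where the path
leaves `X_s` (`s` its first vertex) it cannot enter another `X_t`, so it enters a vertex of
`G ∖ 𝒳`, and hence a component `K` of `G ∖ 𝒳`, through an edge of `δ(K)`. Its last vertex lies
in `X_t` (`t` its last vertex), outside `K`, so the path leaves `K` again through a later edge of
`δ(K)`; the two edges differ because the path has no repeated vertices.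
-/

theorem Nat.exists_le_lt_and_not_succ {P : ℕ → Prop} {a n : ℕ} (han : a ≤ n) (ha : P a)
    (hn : ¬ P n) : ∃ i, a ≤ i ∧ i < n ∧ P i ∧ ¬ P (i + 1) := by
  induction n, han using Nat.le_induction with
  | base => exact absurd ha hn
  | succ n han ih =>
    by_cases hPn : P n
    · exact ⟨n, han, n.lt_succ_self, hPn, hn⟩
    · obtain ⟨i, hai, hin, hPi, hPi'⟩ := ih hPn
      exact ⟨i, hai, by omega, hPi, hPi'⟩

namespace Multigraph

variable {G : Multigraph}

theorem Joins.symm {e : G.E} {u w : G.V} (h : G.Joins e u w) : G.Joins e w u :=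
  Or.symm h

theorem mem_cutE_of_joins {e : G.E} {u w : G.V} {X : Set G.V} (h : G.Joins e u w)
    (hu : u ∈ X) (hw : w ∉ X) : e ∈ G.cutE X := by
  simp only [cutE, Finset.mem_filter, Finset.mem_univ, true_and]
  rcases h with ⟨rfl, rfl⟩ | ⟨rfl, rfl⟩
  · exact Or.inl ⟨hu, hw⟩
  · exact Or.inr ⟨hw, hu⟩

theorem Joins.eq_or_eq {e : G.E} {u w x y : G.V} (h : G.Joins e u w) (h' : G.Joins e x y) :
    u = x ∨ u = y := by
  rcases h with ⟨rfl, rfl⟩ | ⟨rfl, rfl⟩ <;> rcases h' with ⟨h1, h2⟩ | ⟨h1, h2⟩ <;> simp_all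

theorem reachable_subset {W : Set G.V} {v : G.V} (hv : v ∈ W) :
    {u | Relation.ReflTransGen (G.adjOn W) v u} ⊆ W := by
  intro u hu
  induction hu with
  | refl => exact hv
  | tail _ hadj _ => exact hadj.2.1

end Multigraph

namespace TPath

variable {G : Multigraph} {T : Finset G.V} (p : TPath G T)

-- `getD` spares bound proofs; past the last vertex the value is junk.
def vtx (i : ℕ) : G.V := p.verts.getD i p.first

theorem vtx_eq_getElem {i : ℕ} (hi : i < p.verts.length) : p.vtx i = p.verts[i] :=
  List.getD_eq_getElem _ _ hi

theorem vtx_zero : p.vtx 0 = p.first := by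
  have h := p.hfirst
  rw [List.head?_eq_getElem?] at h
  simp [vtx, List.getD_eq_getElem?_getD, h]

theorem vtx_length_edges : p.vtx p.edges.length = p.last := by
  have h := p.hlast
  rw [List.getLast?_eq_getElem?, p.hlen, Nat.add_sub_cancel] at h
  simp [vtx, h]

theorem vtx_inj {i j : ℕ} (hi : i ≤ p.edges.length) (hj : j ≤ p.edges.length) :
    p.vtx i = p.vtx j ↔ i = j := by
  rw [p.vtx_eq_getElem (by rw [p.hlen]; omega), p.vtx_eq_getElem (by rw [p.hlen]; omega)]
  exact p.nodup.getElem_inj_iff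

theorem joins_vtx {i : ℕ} (hi : i < p.edges.length) :
    G.Joins p.edges[i] (p.vtx i) (p.vtx (i + 1)) := by
  rw [p.vtx_eq_getElem (by rw [p.hlen]; omega), p.vtx_eq_getElem (by rw [p.hlen]; omega)]
  exact p.hadj i hi

theorem first_ne_last : p.first ≠ p.last := by
  have hpos : 0 < p.edges.length := List.length_pos_iff.mpr p.hne
  rw [← p.vtx_zero, ← p.vtx_length_edges, Ne, p.vtx_inj (Nat.zero_le _) le_rfl]
  omega

theorem edges_nodup : p.edges.Nodup := by
  refine List.pairwise_iff_getElem.mpr fun i k hi hk hik h => ?_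
  have hvi := (p.joins_vtx hi).eq_or_eq (h ▸ p.joins_vtx hk)
  rw [p.vtx_inj (by omega) (by omega), p.vtx_inj (by omega) (by omega)] at hvi
  omega

theorem two_le_card_edges_inter_cutE {X : Set G.V} {a : ℕ} (ha : a < p.edges.length)
    (hout : p.vtx a ∉ X) (hin : p.vtx (a + 1) ∈ X) (hlast : p.last ∉ X) :
    2 ≤ (p.edges.toFinset ∩ G.cutE X).card := by
  rw [← p.vtx_length_edges] at hlast
  -- the path has to leave `X` again, through a later and hence different edge
  obtain ⟨k, hak, hkn, hk, hk'⟩ := Nat.exists_le_lt_and_not_succ (P := (p.vtx · ∈ X)) ha hin hlast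
  have hne : p.edges[a] ≠ p.edges[k] := fun h =>
    absurd ((p.edges_nodup.getElem_inj_iff).mp h) (by omega)
  have hsub : {p.edges[a], p.edges[k]} ⊆ p.edges.toFinset ∩ G.cutE X := by
    simp only [Finset.insert_subset_iff, Finset.singleton_subset_iff, Finset.mem_inter,
      List.mem_toFinset, List.getElem_mem, true_and]
    exact ⟨G.mem_cutE_of_joins (p.joins_vtx ha).symm hin hout,
      G.mem_cutE_of_joins (p.joins_vtx hkn) hk hk'⟩
  calc 2 = ({p.edges[a], p.edges[k]} : Finset G.E).card := (Finset.card_pair hne).symm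
    _ ≤ _ := Finset.card_le_card hsub

end TPath

namespace TSubpartition

variable {G : Multigraph} {T : Finset G.V} (𝒳 : TSubpartition G T)

def IsCross (e : G.E) : Prop :=
  ∃ s ∈ T, ∃ t ∈ T, s ≠ t ∧ G.src e ∈ 𝒳.X s ∧ G.tgt e ∈ 𝒳.X t

theorem mem_X_self {s : G.V} (hs : s ∈ T) : s ∈ 𝒳.X s :=
  ((𝒳.hmem s hs).symm ▸ rfl : s ∈ 𝒳.X s ∩ (T : Set G.V)).1

theorem notMem_rest_of_mem_X {s u : G.V} (hs : s ∈ T) (hu : u ∈ 𝒳.X s) : u ∉ 𝒳.rest :=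
  fun h => h (Set.mem_biUnion hs hu)

theorem isCross_of_joins {e : G.E} {u w s t : G.V} (h : G.Joins e u w) (hs : s ∈ T) (ht : t ∈ T)
    (hst : s ≠ t) (hu : u ∈ 𝒳.X s) (hw : w ∈ 𝒳.X t) : 𝒳.IsCross e := by
  rcases h with ⟨rfl, rfl⟩ | ⟨rfl, rfl⟩
  · exact ⟨s, hs, t, ht, hst, hu, hw⟩
  · exact ⟨t, ht, s, hs, hst.symm, hw, hu⟩

theorem mem_rest_of_joins {e : G.E} {u w s : G.V} (hcross : ¬ 𝒳.IsCross e) (h : G.Joins e u w)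
    (hs : s ∈ T) (hu : u ∈ 𝒳.X s) (hw : w ∉ 𝒳.X s) : w ∈ 𝒳.rest := by
  simp only [rest, Set.mem_compl_iff, Set.mem_iUnion, not_exists]
  intro t ht hwt
  exact hcross (𝒳.isCross_of_joins h hs ht (fun hst => hw (hst ▸ hwt)) hu hwt)

end TSubpartition

/-- Every `T`-path either contains an edge joining two distinct members of a
`T`-subpartition `𝒳`, or contains at least two edges of `δ(K)` for some connected
component `K` of `G ∖ 𝒳`. -/
theorem TPath_cross_or_two_cut_edges (G : Multigraph) (T : Finset G.V)
    (𝒳 : TSubpartition G T) (p : TPath G T) :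
    (∃ e ∈ p.edges, ∃ s ∈ T, ∃ t ∈ T, s ≠ t ∧ G.src e ∈ 𝒳.X s ∧ G.tgt e ∈ 𝒳.X t) ∨
    (∃ K : Set G.V, G.IsCompOf 𝒳.rest K ∧ 2 ≤ (p.edges.toFinset ∩ G.cutE K).card) := by
  refine or_iff_not_imp_left.mpr fun hcross => ?_
  have hstart : p.vtx 0 ∈ 𝒳.X p.first := by
    rw [p.vtx_zero]
    exact 𝒳.mem_X_self p.hfirstT
  have hend : p.vtx p.edges.length ∉ 𝒳.X p.first := by
    rw [p.vtx_length_edges]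
    exact Set.disjoint_right.mp (𝒳.hdisj _ p.hfirstT _ p.hlastT p.first_ne_last)
      (𝒳.mem_X_self p.hlastT)
  obtain ⟨i, -, hi, hin, hout⟩ :=
    Nat.exists_le_lt_and_not_succ (P := (p.vtx · ∈ 𝒳.X p.first)) (Nat.zero_le _) hstart hend
  have hrest : p.vtx (i + 1) ∈ 𝒳.rest := 𝒳.mem_rest_of_joins
    (fun h => hcross ⟨_, List.getElem_mem hi, h⟩) (p.joins_vtx hi) p.hfirstT hin hout
  set K := {u | Relation.ReflTransGen (G.adjOn 𝒳.rest) (p.vtx (i + 1)) u}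
  have hKrest : K ⊆ 𝒳.rest := G.reachable_subset hrest
  refine ⟨K, ⟨_, hrest, rfl⟩, p.two_le_card_edges_inter_cutE hi ?_ .refl ?_⟩
  · exact fun h => 𝒳.notMem_rest_of_mem_X p.hfirstT hin (hKrest h)
  · exact fun h => 𝒳.notMem_rest_of_mem_X p.hlastT (𝒳.mem_X_self p.hlastT) (hKrest h)
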